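/- For every natural number γ and every field K of characteristic zero, the K-vector space with basis Dias_γ, endowed with the bilinear operations u ⊣_a v := u · h_a(v) and u ⊢_a v := h_a(u) · v for a ∈ {1,…,γ} (where · is concatenation), is a γ-pluriassociative algebra, and it is the free γ-pluriassociative algebra over one generator, namely the one-letter word 0: for every γ-pluriassociative algebra A and every element g ∈ A there exists a unique linear map φ from this space to A such that φ(0) = g and, for all words u, v ∈ Dias_γ and all a ∈ {1,…,γ}, φ(u ⊣_a v) = φ(u) ⊣_a φ(v) and φ(u ⊢_a v) = φ(u) ⊢_a φ(v). -/

import Mathlib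

/-- The set of words over `{0, 1, …, γ}` with exactly one occurrence of `0`. -/
def DiasSet (γ : ℕ) : Set (List ℕ) := {w | w.count 0 = 1 ∧ ∀ l ∈ w, l ≤ γ}

/-- The words of `Dias_γ`, as a type. -/
abbrev DiasW (γ : ℕ) : Type := {w : List ℕ // w ∈ DiasSet γ}

/-- `hA a` replaces every letter smaller than `a` by `a`. -/
def hA (a : ℕ) (w : List ℕ) : List ℕ := w.map (fun b => max a b)

theorem zero_mem (γ : ℕ) : [0] ∈ DiasSet γ := by
  refine ⟨by decide, ?_⟩
  intro l hl
  rw [List.mem_singleton] at hl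
  omega

theorem dashv_mem (γ a : ℕ) (ha1 : 1 ≤ a) (ha2 : a ≤ γ) {u v : List ℕ}
    (hu : u ∈ DiasSet γ) (hv : v ∈ DiasSet γ) : (u ++ hA a v) ∈ DiasSet γ := by
  obtain ⟨hu1, hu2⟩ := hu
  obtain ⟨hv1, hv2⟩ := hv
  refine ⟨?_, ?_⟩
  · have h0 : (hA a v).count 0 = 0 := by
      rw [List.count_eq_zero]
      intro hmem
      obtain ⟨b, hb, hb0⟩ := List.mem_map.mp hmem
      have := le_max_left a b
      omega
    rw [List.count_append, h0, hu1]
  · intro l hl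
    rcases List.mem_append.mp hl with h | h
    · exact hu2 l h
    · obtain ⟨b, hb, rfl⟩ := List.mem_map.mp h
      exact max_le ha2 (hv2 b hb)

theorem vdash_mem (γ a : ℕ) (ha1 : 1 ≤ a) (ha2 : a ≤ γ) {u v : List ℕ}
    (hu : u ∈ DiasSet γ) (hv : v ∈ DiasSet γ) : (hA a u ++ v) ∈ DiasSet γ := by
  obtain ⟨hu1, hu2⟩ := hu
  obtain ⟨hv1, hv2⟩ := hv
  refine ⟨?_, ?_⟩
  · have h0 : (hA a u).count 0 = 0 := by
      rw [List.count_eq_zero]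
      intro hmem
      obtain ⟨b, hb, hb0⟩ := List.mem_map.mp hmem
      have := le_max_left a b
      omega
    rw [List.count_append, h0, hv1]
  · intro l hl
    rcases List.mem_append.mp hl with h | h
    · obtain ⟨b, hb, rfl⟩ := List.mem_map.mp h
      exact max_le ha2 (hu2 b hb)
    · exact hv2 l h

/-- The operation `u ⊣_a v := u · h_a(v)` on the words of `Dias_γ`; the index
`a : Fin γ` encodes the letter `a + 1 ∈ {1, …, γ}`. -/
def dashvW (γ : ℕ) (a : Fin γ) (u v : DiasW γ) : DiasW γ :=
  ⟨u.1 ++ hA (a.1 + 1) v.1,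
    dashv_mem γ (a.1 + 1) (Nat.succ_le_succ (Nat.zero_le _)) a.isLt u.2 v.2⟩

/-- The operation `u ⊢_a v := h_a(u) · v` on the words of `Dias_γ`. -/
def vdashW (γ : ℕ) (a : Fin γ) (u v : DiasW γ) : DiasW γ :=
  ⟨hA (a.1 + 1) u.1 ++ v.1,
    vdash_mem γ (a.1 + 1) (Nat.succ_le_succ (Nat.zero_le _)) a.isLt u.2 v.2⟩

/-- The bilinear extension of `⊣_a` to the vector space with basis `Dias_γ`. -/
noncomputable def dashvF (K : Type) [Field K] (γ : ℕ) (a : Fin γ)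
    (f g : DiasW γ →₀ K) : DiasW γ →₀ K :=
  f.sum fun u cu => g.sum fun v cv =>
    (cu * cv) • Finsupp.single (dashvW γ a u v) (1 : K)

/-- The bilinear extension of `⊢_a` to the vector space with basis `Dias_γ`. -/
noncomputable def vdashF (K : Type) [Field K] (γ : ℕ) (a : Fin γ)
    (f g : DiasW γ →₀ K) : DiasW γ →₀ K :=
  f.sum fun u cu => g.sum fun v cv =>
    (cu * cv) • Finsupp.single (vdashW γ a u v) (1 : K)

/-- A bilinear binary operation. -/
def IsBilinear (K P : Type) [Field K] [AddCommGroup P] [Module K P]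
    (op : P → P → P) : Prop :=
  (∀ x y z : P, op (x + y) z = op x z + op y z) ∧
  (∀ x y z : P, op x (y + z) = op x y + op x z) ∧
  (∀ (c : K) (x y : P), op (c • x) y = c • op x y) ∧
  (∀ (c : K) (x y : P), op x (c • y) = c • op x y)

/-- The data of a `γ`-pluriassociative algebra: bilinear operations `⊣_a`
(`dl a`) and `⊢_a` (`dr a`) for `a ∈ {1, …, γ}` (encoded by `a : Fin γ`)
satisfying the five relations of `γ`-pluriassociative algebras. -/
def IsPluriAssoc (K P : Type) [Field K] [AddCommGroup P] [Module K P] (γ : ℕ)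
    (dl dr : Fin γ → P → P → P) : Prop :=
  (∀ a : Fin γ, IsBilinear K P (dl a) ∧ IsBilinear K P (dr a)) ∧
  (∀ a a' : Fin γ, ∀ x y z : P,
    dl a (dr a' x y) z = dr a' x (dl a y z) ∧
    dl a (dl (max a a') x y) z = dl a x (dr a' y z) ∧
    dr a (dl a' x y) z = dr a x (dr (max a a') y z) ∧
    dl (max a a') (dl a x y) z = dl a x (dl a' y z) ∧
    dr a (dr a' x y) z = dr (max a a') x (dr a y z))


/-! ### Auxiliary development -/

section Aux

variable {γ : ℕ} {K : Type} [Field K]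

/-- Generic bilinear extension of a word operation. -/
noncomputable def bilF (op : DiasW γ → DiasW γ → DiasW γ) (f g : DiasW γ →₀ K) :
    DiasW γ →₀ K :=
  f.sum fun u cu => g.sum fun v cv =>
    (cu * cv) • Finsupp.single (op u v) (1 : K)

lemma dashvF_eq (a : Fin γ) : dashvF K γ a = bilF (dashvW γ a) := rfl

lemma vdashF_eq (a : Fin γ) : vdashF K γ a = bilF (vdashW γ a) := rfl

lemma bilF_single_single (op : DiasW γ → DiasW γ → DiasW γ) (u v : DiasW γ) (c d : K) :
    bilF op (Finsupp.single u c) (Finsupp.single v d)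
      = Finsupp.single (op u v) (c * d) := by
  unfold bilF
  rw [Finsupp.sum_single_index (by simp), Finsupp.sum_single_index (by simp)]
  simp [Finsupp.smul_single]

lemma bilF_zero_left (op : DiasW γ → DiasW γ → DiasW γ) (g : DiasW γ →₀ K) :
    bilF op 0 g = 0 := Finsupp.sum_zero_index

lemma bilF_zero_right (op : DiasW γ → DiasW γ → DiasW γ) (f : DiasW γ →₀ K) :
    bilF op f 0 = 0 := by
  simp [bilF, Finsupp.sum_zero_index]

lemma bilF_add_left (op : DiasW γ → DiasW γ → DiasW γ) (f₁ f₂ g : DiasW γ →₀ K) :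
    bilF op (f₁ + f₂) g = bilF op f₁ g + bilF op f₂ g :=
  Finsupp.sum_add_index' (fun _ => by simp)
    (fun _ b₁ b₂ => by simp [add_mul, add_smul, Finsupp.sum_add])

lemma bilF_add_right (op : DiasW γ → DiasW γ → DiasW γ) (f g₁ g₂ : DiasW γ →₀ K) :
    bilF op f (g₁ + g₂) = bilF op f g₁ + bilF op f g₂ := by
  unfold bilF
  rw [← Finsupp.sum_add]
  exact Finsupp.sum_congr fun u _ =>
    Finsupp.sum_add_index' (fun _ => by simp) (fun _ b₁ b₂ => by simp [mul_add, add_smul])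

lemma bilF_smul_left (op : DiasW γ → DiasW γ → DiasW γ) (c : K) (f g : DiasW γ →₀ K) :
    bilF op (c • f) g = c • bilF op f g := by
  unfold bilF
  rw [Finsupp.sum_smul_index' (fun _ => by simp), Finsupp.smul_sum]
  exact Finsupp.sum_congr fun u _ => by
    rw [Finsupp.smul_sum]
    exact Finsupp.sum_congr fun v _ => by
      simp only [smul_eq_mul, smul_smul, mul_assoc]

lemma bilF_smul_right (op : DiasW γ → DiasW γ → DiasW γ) (c : K) (f g : DiasW γ →₀ K) :
    bilF op f (c • g) = c • bilF op f g := by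
  unfold bilF
  rw [Finsupp.smul_sum]
  exact Finsupp.sum_congr fun u _ => by
    rw [Finsupp.sum_smul_index' (fun _ => by simp), Finsupp.smul_sum]
    exact Finsupp.sum_congr fun v _ => by
      simp only [smul_eq_mul, smul_smul, mul_left_comm]

lemma bilF_isBilinear (op : DiasW γ → DiasW γ → DiasW γ) :
    IsBilinear K (DiasW γ →₀ K) (bilF op) :=
  ⟨bilF_add_left op, bilF_add_right op, bilF_smul_left op, bilF_smul_right op⟩

lemma bilF_rel {op₁ op₂ op₃ op₄ : DiasW γ → DiasW γ → DiasW γ}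
    (h : ∀ u v w : DiasW γ, op₁ (op₂ u v) w = op₃ u (op₄ v w))
    (f g k : DiasW γ →₀ K) :
    bilF op₁ (bilF op₂ f g) k = bilF op₃ f (bilF op₄ g k) := by
  induction f using Finsupp.induction_linear with
  | zero => simp [bilF_zero_left]
  | add f₁ f₂ ih₁ ih₂ => simp [bilF_add_left, ih₁, ih₂]
  | single u c =>
    induction g using Finsupp.induction_linear with
    | zero => simp [bilF_zero_left, bilF_zero_right]
    | add g₁ g₂ ih₁ ih₂ => simp [bilF_add_left, bilF_add_right, ih₁, ih₂]
    | single v d =>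
      induction k using Finsupp.induction_linear with
      | zero => simp [bilF_zero_right]
      | add k₁ k₂ ih₁ ih₂ => simp [bilF_add_right, ih₁, ih₂]
      | single w e =>
        rw [bilF_single_single, bilF_single_single, bilF_single_single,
          bilF_single_single, h u v w, mul_assoc]

/-! ### Word-level identities -/

lemma hA_append (b : ℕ) (u v : List ℕ) : hA b (u ++ v) = hA b u ++ hA b v := by
  simp [hA]

lemma hA_hA (b b' : ℕ) (w : List ℕ) : hA b (hA b' w) = hA (max b b') w := by
  simp only [hA, List.map_map]
  exact List.map_congr_left fun x _ => by simp [Function.comp]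

lemma val_max_fin (a a' : Fin γ) : (max a a').val = max a.val a'.val := by simp

lemma wrel1 (a a' : Fin γ) (u v w : DiasW γ) :
    dashvW γ a (vdashW γ a' u v) w = vdashW γ a' u (dashvW γ a v w) :=
  Subtype.ext (by simp [dashvW, vdashW, List.append_assoc])

lemma wrel2 (a a' : Fin γ) (u v w : DiasW γ) :
    dashvW γ a (dashvW γ (max a a') u v) w = dashvW γ a u (vdashW γ a' v w) := by
  apply Subtype.ext
  simp only [dashvW, vdashW, hA_append, hA_hA, List.append_assoc]
  have : max (a.val + 1) (a'.val + 1) = (max a a').val + 1 := by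
    rw [val_max_fin]; omega
  rw [this]

lemma wrel3 (a a' : Fin γ) (u v w : DiasW γ) :
    vdashW γ a (dashvW γ a' u v) w = vdashW γ a u (vdashW γ (max a a') v w) := by
  apply Subtype.ext
  simp only [dashvW, vdashW, hA_append, hA_hA, List.append_assoc]
  have : max (a.val + 1) (a'.val + 1) = (max a a').val + 1 := by
    rw [val_max_fin]; omega
  rw [this]

lemma wrel4 (a a' : Fin γ) (u v w : DiasW γ) :
    dashvW γ (max a a') (dashvW γ a u v) w = dashvW γ a u (dashvW γ a' v w) := by
  apply Subtype.ext
  simp only [dashvW, vdashW, hA_append, hA_hA, List.append_assoc]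
  have : max (a.val + 1) (a'.val + 1) = (max a a').val + 1 := by
    rw [val_max_fin]; omega
  rw [this]

lemma wrel5 (a a' : Fin γ) (u v w : DiasW γ) :
    vdashW γ a (vdashW γ a' u v) w = vdashW γ (max a a') u (vdashW γ a v w) := by
  apply Subtype.ext
  simp only [dashvW, vdashW, hA_append, hA_hA, List.append_assoc]
  have : max (a.val + 1) (a'.val + 1) = (max a a').val + 1 := by
    rw [val_max_fin]; omega
  rw [this]

end Aux

/-! ### Evaluation in an arbitrary pluriassociative algebra -/

section Eval

variable {γ : ℕ} {K A : Type} [Field K] [AddCommGroup A] [Module K A]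

/-- The operation indexed by a natural letter `b ∈ {1, …, γ}`. -/
def dlN (op : Fin γ → A → A → A) (b : ℕ) : A → A → A :=
  if h : b - 1 < γ then op ⟨b - 1, h⟩ else fun _ _ => 0

lemma dlN_eq (op : Fin γ → A → A → A) {b : ℕ} (h1 : 1 ≤ b) (h2 : b ≤ γ) :
    dlN op b = op ⟨b - 1, by omega⟩ := dif_pos _

lemma dlN_fin (op : Fin γ → A → A → A) (a : Fin γ) : dlN op (a.val + 1) = op a :=
  dif_pos _

variable (dl dr : Fin γ → A → A → A) (g : A)

/-- Fold of `⊣`-operations over the suffix. -/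
def coreE (s : List ℕ) (x : A) : A := s.foldl (fun y c => dlN dl c y g) x

/-- Fold of `⊢`-operations over the prefix. -/
def tailE (p : List ℕ) (z : A) : A := p.foldr (fun b w => dlN dr b g w) z

/-- Evaluation of the word `p ++ 0 :: s`. -/
def evPS (p s : List ℕ) : A := tailE dr g p (coreE dl g s g)

/-- Evaluation of a word of `Dias_γ`. -/
def evW (w : List ℕ) : A :=
  evPS dl dr g (w.takeWhile (· ≠ 0)) ((w.dropWhile (· ≠ 0)).tail)

lemma split_tw (p s : List ℕ) (hp : ∀ c ∈ p, c ≠ 0) :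
    (p ++ 0 :: s).takeWhile (· ≠ 0) = p ∧ (p ++ 0 :: s).dropWhile (· ≠ 0) = 0 :: s := by
  induction p with
  | nil => constructor <;> simp [List.takeWhile_cons, List.dropWhile_cons]
  | cons a p ih =>
    have ha : a ≠ 0 := hp a (by simp)
    have h2 := ih fun c hc => hp c (by simp [hc])
    refine ⟨?_, ?_⟩ <;> simp_all [List.takeWhile_cons, List.dropWhile_cons]

lemma evW_eq (p s : List ℕ) (hp : ∀ c ∈ p, c ≠ 0) :
    evW dl dr g (p ++ 0 :: s) = evPS dl dr g p s := by
  unfold evW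
  rw [(split_tw p s hp).1, (split_tw p s hp).2]
  rfl

lemma dias_decomp {w : List ℕ} (hw : w ∈ DiasSet γ) :
    ∃ p s, w = p ++ 0 :: s ∧ (∀ c ∈ p, 1 ≤ c ∧ c ≤ γ) ∧ (∀ c ∈ s, 1 ≤ c ∧ c ≤ γ) := by
  obtain ⟨h1, h2⟩ := hw
  induction w with
  | nil => simp at h1
  | cons c t ih =>
    by_cases hc : c = 0
    · subst hc
      refine ⟨[], t, rfl, by simp, ?_⟩
      have ht : t.count 0 = 0 := by
        rw [List.count_cons_self] at h1
        omega
      intro c hc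
      have hne : c ≠ 0 := by
        intro h
        subst h
        rw [List.count_eq_zero] at ht
        exact ht hc
      exact ⟨by omega, h2 c (by simp [hc])⟩
    · have h1' : t.count 0 = 1 := by
        rwa [List.count_cons_of_ne hc] at h1
      obtain ⟨p, s, hps, hp, hs⟩ := ih h1' (fun l hl => h2 l (by simp [hl]))
      exact ⟨c :: p, s, by simp [hps], by
        intro x hx
        rcases List.mem_cons.mp hx with rfl | hx
        · exact ⟨by omega, h2 x (by simp)⟩
        · exact hp x hx, hs⟩

variable {dl dr}

lemma fin_max_eq {b b' : ℕ} (hb : 1 ≤ b) (hb2 : b ≤ γ) (hb' : 1 ≤ b') (hb'2 : b' ≤ γ) :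
    (⟨max b b' - 1, by omega⟩ : Fin γ)
      = max (⟨b - 1, by omega⟩ : Fin γ) ⟨b' - 1, by omega⟩ := by
  apply Fin.ext
  rw [val_max_fin]
  simp
  omega

section Rels

variable (H : IsPluriAssoc K A γ dl dr)
include H

lemma NR1 {b b' : ℕ} (hb : 1 ≤ b) (hb2 : b ≤ γ) (hb' : 1 ≤ b') (hb'2 : b' ≤ γ)
    (x y z : A) :
    dlN dl b (dlN dr b' x y) z = dlN dr b' x (dlN dl b y z) := by
  rw [dlN_eq dl hb hb2, dlN_eq dr hb' hb'2]
  exact (H.2 ⟨b - 1, by omega⟩ ⟨b' - 1, by omega⟩ x y z).1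

lemma NR2 {b b' : ℕ} (hb : 1 ≤ b) (hb2 : b ≤ γ) (hb' : 1 ≤ b') (hb'2 : b' ≤ γ)
    (x y z : A) :
    dlN dl b (dlN dl (max b b') x y) z = dlN dl b x (dlN dr b' y z) := by
  rw [dlN_eq dl hb hb2, dlN_eq dl (b := max b b') (by omega) (by omega),
    dlN_eq dr hb' hb'2, fin_max_eq hb hb2 hb' hb'2]
  exact (H.2 ⟨b - 1, by omega⟩ ⟨b' - 1, by omega⟩ x y z).2.1

lemma NR3 {b b' : ℕ} (hb : 1 ≤ b) (hb2 : b ≤ γ) (hb' : 1 ≤ b') (hb'2 : b' ≤ γ)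
    (x y z : A) :
    dlN dr b (dlN dl b' x y) z = dlN dr b x (dlN dr (max b b') y z) := by
  rw [dlN_eq dr hb hb2, dlN_eq dl hb' hb'2,
    dlN_eq dr (b := max b b') (by omega) (by omega), fin_max_eq hb hb2 hb' hb'2]
  exact (H.2 ⟨b - 1, by omega⟩ ⟨b' - 1, by omega⟩ x y z).2.2.1

lemma NR4 {b b' : ℕ} (hb : 1 ≤ b) (hb2 : b ≤ γ) (hb' : 1 ≤ b') (hb'2 : b' ≤ γ)
    (x y z : A) :
    dlN dl (max b b') (dlN dl b x y) z = dlN dl b x (dlN dl b' y z) := by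
  rw [dlN_eq dl hb hb2, dlN_eq dl hb' hb'2,
    dlN_eq dl (b := max b b') (by omega) (by omega), fin_max_eq hb hb2 hb' hb'2]
  exact (H.2 ⟨b - 1, by omega⟩ ⟨b' - 1, by omega⟩ x y z).2.2.2.1

lemma NR5 {b b' : ℕ} (hb : 1 ≤ b) (hb2 : b ≤ γ) (hb' : 1 ≤ b') (hb'2 : b' ≤ γ)
    (x y z : A) :
    dlN dr b (dlN dr b' x y) z = dlN dr (max b b') x (dlN dr b y z) := by
  rw [dlN_eq dr hb hb2, dlN_eq dr hb' hb'2,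
    dlN_eq dr (b := max b b') (by omega) (by omega), fin_max_eq hb hb2 hb' hb'2]
  exact (H.2 ⟨b - 1, by omega⟩ ⟨b' - 1, by omega⟩ x y z).2.2.2.2

end Rels

section Morph

variable (H : IsPluriAssoc K A γ dl dr)
variable {b : ℕ} (hb : 1 ≤ b) (hb2 : b ≤ γ)
include H hb hb2

lemma comm1 (p : List ℕ) (hp : ∀ c ∈ p, 1 ≤ c ∧ c ≤ γ) (z w : A) :
    dlN dl b (tailE dr g p z) w = tailE dr g p (dlN dl b z w) := by
  induction p with
  | nil => rfl
  | cons d p ih =>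
    have hd := hp d (by simp)
    show dlN dl b (dlN dr d g (tailE dr g p z)) w = dlN dr d g (tailE dr g p (dlN dl b z w))
    rw [NR1 H hb hb2 hd.1 hd.2, ih fun c hc => hp c (by simp [hc])]

lemma lemI'' (r : List ℕ) (hr : ∀ c ∈ r, 1 ≤ c ∧ c ≤ γ) (x y : A) :
    coreE dl g (hA b r) (dlN dl b x y) = dlN dl b x (coreE dl g r y) := by
  induction r generalizing y with
  | nil => rfl
  | cons c r ih =>
    have hc := hr c (by simp)
    show coreE dl g (hA b r) (dlN dl (max b c) (dlN dl b x y) g)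
        = dlN dl b x (coreE dl g r (dlN dl c y g))
    rw [NR4 H hb hb2 hc.1 hc.2, ih fun d hd => hr d (by simp [hd])]

lemma lemI' (q r : List ℕ) (hq : ∀ c ∈ q, 1 ≤ c ∧ c ≤ γ)
    (hr : ∀ c ∈ r, 1 ≤ c ∧ c ≤ γ) (x : A) :
    coreE dl g (hA b (q ++ 0 :: r)) x = dlN dl b x (evPS dl dr g q r) := by
  induction q generalizing x with
  | nil =>
    show coreE dl g (max b 0 :: hA b r) x = _
    rw [Nat.max_zero]
    show coreE dl g (hA b r) (dlN dl b x g) = _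
    rw [lemI'' g H hb hb2 r hr x g]
    rfl
  | cons d q ih =>
    have hd := hq d (by simp)
    show coreE dl g (hA b (q ++ 0 :: r)) (dlN dl (max b d) x g)
        = dlN dl b x (dlN dr d g (evPS dl dr g q r))
    rw [ih (fun c hc => hq c (by simp [hc])) (dlN dl (max b d) x g),
      ← NR2 H hb hb2 hd.1 hd.2]

lemma lemII'' (s : List ℕ) (hs : ∀ c ∈ s, 1 ≤ c ∧ c ≤ γ) (y z : A) :
    dlN dr b y (tailE dr g (hA b s) z) = dlN dr b (coreE dl g s y) z := by
  induction s generalizing y with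
  | nil => rfl
  | cons c s ih =>
    have hc := hs c (by simp)
    show dlN dr b y (dlN dr (max b c) g (tailE dr g (hA b s) z))
        = dlN dr b (coreE dl g s (dlN dl c y g)) z
    rw [← NR3 H hb hb2 hc.1 hc.2, ih (fun d hd => hs d (by simp [hd]))]

lemma lemII' (p s : List ℕ) (hp : ∀ c ∈ p, 1 ≤ c ∧ c ≤ γ)
    (hs : ∀ c ∈ s, 1 ≤ c ∧ c ≤ γ) (z : A) :
    tailE dr g (hA b (p ++ 0 :: s)) z = dlN dr b (evPS dl dr g p s) z := by
  induction p with
  | nil =>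
    show dlN dr (max b 0) g (tailE dr g (hA b s) z) = _
    rw [Nat.max_zero]
    exact lemII'' g H hb hb2 s hs g z
  | cons d p ih =>
    have hd := hp d (by simp)
    show dlN dr (max b d) g (tailE dr g (hA b (p ++ 0 :: s)) z)
        = dlN dr b (dlN dr d g (evPS dl dr g p s)) z
    rw [ih fun c hc => hp c (by simp [hc]), NR5 H hb hb2 hd.1 hd.2]

lemma eval_dashv {u v : List ℕ} (hu : u ∈ DiasSet γ) (hv : v ∈ DiasSet γ) :
    evW dl dr g (u ++ hA b v) = dlN dl b (evW dl dr g u) (evW dl dr g v) := by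
  obtain ⟨p, s, rfl, hp, hs⟩ := dias_decomp hu
  obtain ⟨q, r, rfl, hq, hr⟩ := dias_decomp hv
  rw [evW_eq dl dr g p s fun c hc => (by have := (hp c hc).1; omega : c ≠ 0),
    evW_eq dl dr g q r fun c hc => (by have := (hq c hc).1; omega : c ≠ 0)]
  have : (p ++ 0 :: s) ++ hA b (q ++ 0 :: r) = p ++ 0 :: (s ++ hA b (q ++ 0 :: r)) := by
    simp
  rw [this, evW_eq dl dr g p _ fun c hc => (by have := (hp c hc).1; omega : c ≠ 0)]
  show tailE dr g p (coreE dl g (s ++ hA b (q ++ 0 :: r)) g) = _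
  rw [show coreE dl g (s ++ hA b (q ++ 0 :: r)) g
      = coreE dl g (hA b (q ++ 0 :: r)) (coreE dl g s g) from List.foldl_append ..,
    lemI' g H hb hb2 q r hq hr]
  exact (comm1 g H hb hb2 p hp _ _).symm

lemma eval_vdash {u v : List ℕ} (hu : u ∈ DiasSet γ) (hv : v ∈ DiasSet γ) :
    evW dl dr g (hA b u ++ v) = dlN dr b (evW dl dr g u) (evW dl dr g v) := by
  obtain ⟨p, s, rfl, hp, hs⟩ := dias_decomp hu
  obtain ⟨q, r, rfl, hq, hr⟩ := dias_decomp hv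
  rw [evW_eq dl dr g p s fun c hc => (by have := (hp c hc).1; omega : c ≠ 0),
    evW_eq dl dr g q r fun c hc => (by have := (hq c hc).1; omega : c ≠ 0)]
  have h1 : hA b (p ++ 0 :: s) ++ (q ++ 0 :: r)
      = (hA b (p ++ 0 :: s) ++ q) ++ 0 :: r := by simp
  have h2 : ∀ c ∈ hA b (p ++ 0 :: s) ++ q, c ≠ 0 := by
    intro c hc
    rcases List.mem_append.mp hc with hc | hc
    · obtain ⟨d, _, rfl⟩ := List.mem_map.mp hc
      omega
    · exact (by have := (hq c hc).1; omega : c ≠ 0)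
  rw [h1, evW_eq dl dr g _ r h2]
  show tailE dr g (hA b (p ++ 0 :: s) ++ q) (coreE dl g r g) = _
  rw [show tailE dr g (hA b (p ++ 0 :: s) ++ q) (coreE dl g r g)
      = tailE dr g (hA b (p ++ 0 :: s)) (tailE dr g q (coreE dl g r g)) from
        List.foldr_append ..,
    lemII' g H hb hb2 p s hp hs]
  rfl

end Morph

end Eval

/-- The vector space with basis `Dias_γ`, with the bilinear extensions of
`u ⊣_a v = u · h_a(v)` and `u ⊢_a v = h_a(u) · v`, is a `γ`-pluriassociative
algebra, and it is free over the one generator `0`. -/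
theorem stmt12 (γ : ℕ) (K : Type) [Field K] [CharZero K] :
    IsPluriAssoc K (DiasW γ →₀ K) γ (dashvF K γ) (vdashF K γ) ∧
    (∀ (A : Type) [AddCommGroup A] [Module K A],
      ∀ dl dr : Fin γ → A → A → A, IsPluriAssoc K A γ dl dr →
      ∀ g : A, ∃! φ : (DiasW γ →₀ K) →ₗ[K] A,
        φ (Finsupp.single ⟨[0], zero_mem γ⟩ (1 : K)) = g ∧
        ∀ (u v : DiasW γ) (a : Fin γ),
          φ (Finsupp.single (dashvW γ a u v) (1 : K)) =
            dl a (φ (Finsupp.single u (1 : K))) (φ (Finsupp.single v (1 : K))) ∧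
          φ (Finsupp.single (vdashW γ a u v) (1 : K)) =
            dr a (φ (Finsupp.single u (1 : K))) (φ (Finsupp.single v (1 : K)))) := by
  constructor
  · constructor
    · intro a
      rw [dashvF_eq a, vdashF_eq a]
      exact ⟨bilF_isBilinear (dashvW γ a), bilF_isBilinear (vdashW γ a)⟩
    · intro a a' x y z
      simp only [dashvF_eq, vdashF_eq]
      exact ⟨bilF_rel (wrel1 a a') x y z, bilF_rel (wrel2 a a') x y z,
        bilF_rel (wrel3 a a') x y z, bilF_rel (wrel4 a a') x y z,
        bilF_rel (wrel5 a a') x y z⟩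
  · intro A _i1 _i2 dl dr H gA
    set Φ : (DiasW γ →₀ K) →ₗ[K] A :=
      Finsupp.lsum (R := K) K fun w : DiasW γ =>
        LinearMap.toSpanSingleton K A (evW dl dr gA w.1) with hΦ
    have hsingle : ∀ w : DiasW γ, Φ (Finsupp.single w 1) = evW dl dr gA w.1 := by
      intro w
      rw [hΦ, Finsupp.lsum_single]
      exact one_smul K _
    have hzeroW : evW dl dr gA [0] = gA := by
      have h : ([0] : List ℕ) = [] ++ 0 :: [] := rfl
      rw [h, evW_eq dl dr gA [] [] (by simp)]
      rfl
    have cond1 : Φ (Finsupp.single ⟨[0], zero_mem γ⟩ (1 : K)) = gA := by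
      rw [hsingle]; exact hzeroW
    have cond2 : ∀ (u v : DiasW γ) (a : Fin γ),
        Φ (Finsupp.single (dashvW γ a u v) (1 : K)) =
          dl a (Φ (Finsupp.single u (1 : K))) (Φ (Finsupp.single v (1 : K))) ∧
        Φ (Finsupp.single (vdashW γ a u v) (1 : K)) =
          dr a (Φ (Finsupp.single u (1 : K))) (Φ (Finsupp.single v (1 : K))) := by
      intro u v a
      constructor
      · rw [hsingle, hsingle, hsingle]
        have e1 : (dashvW γ a u v).1 = u.1 ++ hA (a.val + 1) v.1 := rfl
        rw [e1, eval_dashv (b := a.val + 1) gA H (by omega)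
          (by have := a.isLt; omega) u.2 v.2, dlN_fin]
      · rw [hsingle, hsingle, hsingle]
        have e1 : (vdashW γ a u v).1 = hA (a.val + 1) u.1 ++ v.1 := rfl
        rw [e1, eval_vdash (b := a.val + 1) gA H (by omega)
          (by have := a.isLt; omega) u.2 v.2, dlN_fin]
    refine ⟨Φ, ⟨cond1, cond2⟩, ?_⟩
    intro Ψ hΨ
    have key : ∀ n : ℕ, ∀ w : DiasW γ, w.1.length ≤ n →
        Ψ (Finsupp.single w (1 : K)) = Φ (Finsupp.single w (1 : K)) := by
      intro n
      induction n with
      | zero =>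
        rintro ⟨l, hl⟩ hw
        exfalso
        have hl0 : l = [] := List.length_eq_zero_iff.mp (Nat.le_zero.mp hw)
        subst hl0
        simpa using hl.1
      | succ n ih =>
        rintro ⟨_ | ⟨c, t⟩, hl⟩ hw
        · exact absurd hl.1 (by simp)
        by_cases hc : c = 0
        · subst hc
          have htc : t.count 0 = 0 := by
            have h1 := hl.1
            rw [List.count_cons_self] at h1
            omega
          by_cases ht : t = []
          · subst ht
            have e : (⟨[0], hl⟩ : DiasW γ) = ⟨[0], zero_mem γ⟩ := rfl
            rw [e, hΨ.1, cond1]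
          · have hne' : (0 :: t : List ℕ) ≠ [] := by simp
            set c' := (0 :: t).getLast hne' with hc'
            have hc'mem : c' ∈ t := by
              rw [hc', List.getLast_cons ht]
              exact List.getLast_mem ht
            have hc'0 : c' ≠ 0 := by
              intro h
              rw [List.count_eq_zero] at htc
              exact htc (h ▸ hc'mem)
            have hc'γ : c' ≤ γ := hl.2 c' (by simp [hc'mem])
            set u' := (0 :: t).dropLast with hu'def
            have hsplit : u' ++ [c'] = 0 :: t := List.dropLast_append_getLast hne'
            have hu' : u' ∈ DiasSet γ := by
              constructor
              · have h1 := hl.1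
                rw [← hsplit, List.count_append] at h1
                have : List.count 0 [c'] = 0 := by
                  simp [List.count_singleton]
                  omega
                omega
              · intro x hx
                exact hl.2 x (by rw [← hsplit]; exact List.mem_append.mpr (Or.inl hx))
            have heq : (⟨0 :: t, hl⟩ : DiasW γ)
                = dashvW γ ⟨c' - 1, by omega⟩ ⟨u', hu'⟩ ⟨[0], zero_mem γ⟩ := by
              apply Subtype.ext
              show (0 : ℕ) :: t = u' ++ hA (c' - 1 + 1) [0]
              have : hA (c' - 1 + 1) [0] = [c'] := by
                simp [hA]
                omega
              rw [this, hsplit]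
            have hlen : u'.length ≤ n := by
              have := @List.length_dropLast _ (0 :: t)
              simp only [hu'def]
              simp at hw ⊢
              omega
            rw [heq, (hΨ.2 ⟨u', hu'⟩ ⟨[0], zero_mem γ⟩ ⟨c' - 1, by omega⟩).1,
              (cond2 ⟨u', hu'⟩ ⟨[0], zero_mem γ⟩ ⟨c' - 1, by omega⟩).1,
              ih ⟨u', hu'⟩ hlen, hΨ.1, cond1]
        · have hc1 : 1 ≤ c := by omega
          have hcγ : c ≤ γ := hl.2 c (by simp)
          have ht' : t ∈ DiasSet γ := by
            constructor
            · have h1 := hl.1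
              rwa [List.count_cons_of_ne hc] at h1
            · exact fun x hx => hl.2 x (by simp [hx])
          have heq : (⟨c :: t, hl⟩ : DiasW γ)
              = vdashW γ ⟨c - 1, by omega⟩ ⟨[0], zero_mem γ⟩ ⟨t, ht'⟩ := by
            apply Subtype.ext
            show (c : ℕ) :: t = hA (c - 1 + 1) [0] ++ t
            have : hA (c - 1 + 1) [0] = [c] := by
              simp [hA]
              omega
            rw [this]
            rfl
          have hlen : t.length ≤ n := by
            simp at hw
            omega
          rw [heq, (hΨ.2 ⟨[0], zero_mem γ⟩ ⟨t, ht'⟩ ⟨c - 1, by omega⟩).2,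
            (cond2 ⟨[0], zero_mem γ⟩ ⟨t, ht'⟩ ⟨c - 1, by omega⟩).2,
            ih ⟨t, ht'⟩ hlen, hΨ.1, cond1]
    apply Finsupp.lhom_ext
    intro w b
    have h1 : (Finsupp.single w b : DiasW γ →₀ K) = b • Finsupp.single w (1 : K) := by
      rw [Finsupp.smul_single, smul_eq_mul, mul_one]
    rw [h1, map_smul, map_smul, key w.1.length w le_rfl]
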